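/- arXiv:1905.08135 — 3 statements merged into one kernel-verified Lean document; each statement's English description precedes it below -/
import Mathlib

section
/- Let M and M' be topological spaces, V ⊆ M an open subset, p : M → ℝ a continuous function with p ≥ 0, and π : M' → M a continuous map such that the image π(π⁻¹(V)) is dense in V. If f : V → ℂ is continuous and the composite f ∘ π : π⁻¹(V) → ℂ has (p ∘ π)-bounded growth relative to M', then f has p-bounded growth relative to M. (This is the converse direction of Lemma 7.2 of the paper.) -/
/-!
For a fixed exponent `a`, the function `x ↦ p x ^ a * ‖f x‖` is continuous on `V`, so the set
where it is at most `C` is closed in `V`. The bound for `f ∘ π` says that this set contains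
`π (π⁻¹ V)`, which is dense in `V`; hence it is all of `V`.
-/

/-- A function `f : V → ℂ` has `p`-bounded growth relative to `M` if there exists `a > 0`
such that `x ↦ p(x)^a * |f(x)|` is bounded on `V`. -/
def HasPBoundedGrowth {M : Type*} {V : Set M} (p : M → ℝ) (f : V → ℂ) : Prop :=
  ∃ a : ℝ, 0 < a ∧ ∃ C : ℝ, ∀ x : V, p (x : M) ^ a * ‖f x‖ ≤ C

theorem Set.denseRange_restrictPreimage_iff {α β : Type*} [TopologicalSpace β] {f : α → β}
    {t : Set β} : DenseRange (t.restrictPreimage f) ↔ t ⊆ closure (f '' (f ⁻¹' t)) := by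
  rw [DenseRange, Subtype.dense_iff, range_restrictPreimage, Subtype.image_preimage_coe,
    image_preimage_eq_inter_range]

theorem HasPBoundedGrowth.of_comp_denseRange {M M' : Type*} [TopologicalSpace M]
    {V : Set M} {V' : Set M'} {p : M → ℝ} (hp : Continuous p) {f : V → ℂ} (hf : Continuous f)
    {π : M' → M} (hπ : Set.MapsTo π V' V) (hdense : DenseRange hπ.restrict)
    (h : HasPBoundedGrowth (p ∘ π) (f ∘ hπ.restrict)) : HasPBoundedGrowth p f := by
  obtain ⟨a, ha, C, hC⟩ := h
  have hweighted : Continuous fun x : V => p x ^ a * ‖f x‖ :=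
    ((hp.comp continuous_subtype_val).rpow_const fun _ => .inr ha.le).mul hf.norm
  exact ⟨a, ha, C, fun x => hdense.induction_on x (isClosed_le hweighted continuous_const) hC⟩

theorem pBoundedGrowth_of_comp_general {M M' : Type*} [TopologicalSpace M]
    (V : Set M) (p : M → ℝ) (hp : Continuous p)
    (π : M' → M)
    (hdense : ∀ v ∈ V, v ∈ closure (π '' (π ⁻¹' V)))
    (f : V → ℂ) (hf : Continuous f)
    (h : HasPBoundedGrowth (p ∘ π) (fun x : π ⁻¹' V => f ⟨π (x : M'), x.2⟩)) :
    HasPBoundedGrowth p f :=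
  h.of_comp_denseRange hp hf (Set.mapsTo_preimage π V)
    (Set.denseRange_restrictPreimage_iff.2 hdense)

/-- Converse direction of Lemma 7.2: if `f` is continuous, `π : M' → M` is continuous and
`π (π⁻¹ V)` is dense in `V`, then `p ∘ π`-bounded growth of `f ∘ π` implies `p`-bounded
growth of `f`. -/
theorem pBoundedGrowth_of_comp {M M' : Type*} [TopologicalSpace M] [TopologicalSpace M']
    (V : Set M) (hV : IsOpen V) (p : M → ℝ) (hp : Continuous p) (hp0 : ∀ x, 0 ≤ p x)
    (π : M' → M) (hπ : Continuous π)
    (hdense : ∀ v ∈ V, v ∈ closure (π '' (π ⁻¹' V)))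
    (f : V → ℂ) (hf : Continuous f)
    (h : HasPBoundedGrowth (p ∘ π) (fun x : π ⁻¹' V => f ⟨π (x : M'), x.2⟩)) :
    HasPBoundedGrowth p f :=
  pBoundedGrowth_of_comp_general V p hp π hdense f hf h
end

section
/- Let 𝔤 be a Lie algebra over ℂ, 𝔥 ⊆ 𝔤 a Lie subalgebra, and V a module over the universal enveloping algebra U(𝔤). Let ℱ ⊆ Hom_ℂ(U(𝔤), ℂ) be the subspace of linear functionals vanishing on 𝔥·U(𝔤), the ℂ-linear span of all products ι(X)·u where ι : 𝔤 → U(𝔤) is the canonical embedding, X ∈ 𝔥 and u ∈ U(𝔤); equip ℱ with the U(𝔤)-module structure given by (Y · f)(u) := f(u·Y) for Y, u ∈ U(𝔤), f ∈ ℱ (this action is well defined on ℱ). Let 𝔥V ⊆ V denote the ℂ-linear span of { ι(X)·v : X ∈ 𝔥, v ∈ V }. Then the map sending a U(𝔤)-module homomorphism Φ : V → ℱ to the linear functional on V/𝔥V induced by v ↦ Φ(v)(1) is a well-defined ℂ-linear bijection Hom_{U(𝔤)}(V, ℱ) ≅ Hom_ℂ(V/𝔥V, ℂ), with inverse sending Ψ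 : V/𝔥V → ℂ to the homomorphism v ↦ (u ↦ Ψ(u·v mod 𝔥V)). (This is the algebraic core of Lemma 9.1 of the paper, identifying U(𝔤)-maps from V into formal functions on H\G at the base point with linear functionals on the coinvariants V/𝔥V.) -/
set_option linter.unusedSectionVars false

namespace Stmt5

open UniversalEnvelopingAlgebra

variable (L : Type*) [LieRing L] [LieAlgebra ℂ L]
variable (H : LieSubalgebra ℂ L)
variable (V : Type*) [AddCommGroup V] [Module ℂ V]
  [Module (UniversalEnvelopingAlgebra ℂ L) V]
  [IsScalarTower ℂ (UniversalEnvelopingAlgebra ℂ L) V]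

/-- `𝔥V` : the `ℂ`-linear span of `{ ι(X)·v : X ∈ 𝔥, v ∈ V }`. -/
def hSmulV : Submodule ℂ V :=
  Submodule.span ℂ {v : V | ∃ X ∈ H, ∃ w : V, (ι ℂ X : UniversalEnvelopingAlgebra ℂ L) • w = v}

/-- The space of `U(𝔤)`-module homomorphisms `V → ℱ`, where
`ℱ ⊆ Hom_ℂ(U(𝔤), ℂ)` is the subspace of linear functionals vanishing on `𝔥·U(𝔤)`,
endowed with the `U(𝔤)`-action `(Y·f)(u) = f(u·Y)`.  Concretely, such a homomorphism is a
`ℂ`-linear map `Φ : V → Hom_ℂ(U(𝔤), ℂ)` such that every `Φ(v)` kills `ι(X)·u` for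
`X ∈ 𝔥`, and such that `Φ(Y·v)(u) = Φ(v)(u·Y)`. -/
noncomputable def HomVF : Submodule ℂ (V →ₗ[ℂ] (UniversalEnvelopingAlgebra ℂ L →ₗ[ℂ] ℂ)) where
  carrier := {Φ | (∀ (v : V), ∀ X ∈ H, ∀ u : UniversalEnvelopingAlgebra ℂ L,
      Φ v ((ι ℂ X : UniversalEnvelopingAlgebra ℂ L) * u) = 0) ∧
    (∀ (Y : UniversalEnvelopingAlgebra ℂ L) (v : V) (u : UniversalEnvelopingAlgebra ℂ L),
      Φ (Y • v) u = Φ v (u * Y))}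
  add_mem' := by
    rintro Φ Ψ ⟨hΦ1, hΦ2⟩ ⟨hΨ1, hΨ2⟩
    constructor
    · intro v X hX u
      simp only [LinearMap.add_apply]
      rw [hΦ1 v X hX u, hΨ1 v X hX u, add_zero]
    · intro Y v u
      simp only [LinearMap.add_apply]
      rw [hΦ2 Y v u, hΨ2 Y v u]
  zero_mem' := by
    constructor <;> intros <;> simp only [LinearMap.zero_apply]
  smul_mem' := by
    rintro c Φ ⟨hΦ1, hΦ2⟩
    constructor
    · intro v X hX u
      simp only [LinearMap.smul_apply, smul_eq_mul]
      rw [hΦ1 v X hX u, mul_zero]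
    · intro Y v u
      simp only [LinearMap.smul_apply, smul_eq_mul]
      rw [hΦ2 Y v u]

lemma smul_comm' (c : ℂ) (u : UniversalEnvelopingAlgebra ℂ L) (v : V) :
    u • (c • v) = c • (u • v) := by
  rw [← algebraMap_smul (UniversalEnvelopingAlgebra ℂ L) c v, ← mul_smul,
    ← Algebra.commutes, mul_smul, algebraMap_smul]

noncomputable def fwdAux (Φ : HomVF L H V) : (V ⧸ hSmulV L H V) →ₗ[ℂ] ℂ :=
  Submodule.liftQ _ ((LinearMap.applyₗ (1 : UniversalEnvelopingAlgebra ℂ L)).comp Φ.1) (by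
    rw [hSmulV, Submodule.span_le]
    rintro _ ⟨X, hX, w, rfl⟩
    have h := Φ.2.1 w X hX 1
    have h2 := Φ.2.2 (ι ℂ X) w 1
    simp only [SetLike.mem_coe, LinearMap.mem_ker, LinearMap.comp_apply]
    change Φ.1 _ 1 = 0
    rw [h2, one_mul]
    simpa using h)

@[simp] lemma fwdAux_mk (Φ : HomVF L H V) (v : V) :
    fwdAux L H V Φ (Submodule.Quotient.mk v) = Φ.1 v 1 := rfl

noncomputable def fwd : HomVF L H V →ₗ[ℂ] ((V ⧸ hSmulV L H V) →ₗ[ℂ] ℂ) where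
  toFun := fwdAux L H V
  map_add' Φ Ψ := by
    refine LinearMap.ext fun x => ?_
    obtain ⟨v, rfl⟩ := Submodule.Quotient.mk_surjective _ x
    simp
  map_smul' c Φ := by
    refine LinearMap.ext fun x => ?_
    obtain ⟨v, rfl⟩ := Submodule.Quotient.mk_surjective _ x
    simp

noncomputable def bwdAux (Ψ : (V ⧸ hSmulV L H V) →ₗ[ℂ] ℂ) :
    V →ₗ[ℂ] (UniversalEnvelopingAlgebra ℂ L →ₗ[ℂ] ℂ) where
  toFun v :=
    { toFun := fun u => Ψ (Submodule.Quotient.mk (u • v))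
      map_add' := fun u u' => by simp [add_smul]
      map_smul' := fun c u => by simp [smul_assoc] }
  map_add' v w := by ext u; simp
  map_smul' c v := by ext u; simp [smul_comm' L V c u v]

@[simp] lemma bwdAux_apply (Ψ : (V ⧸ hSmulV L H V) →ₗ[ℂ] ℂ) (v : V)
    (u : UniversalEnvelopingAlgebra ℂ L) :
    bwdAux L H V Ψ v u = Ψ (Submodule.Quotient.mk (u • v)) := rfl

lemma bwdAux_mem (Ψ : (V ⧸ hSmulV L H V) →ₗ[ℂ] ℂ) : bwdAux L H V Ψ ∈ HomVF L H V := by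
  constructor
  · intro v X hX u
    rw [bwdAux_apply, mul_smul]
    have : Submodule.Quotient.mk ((ι ℂ X : UniversalEnvelopingAlgebra ℂ L) • u • v)
        = (0 : V ⧸ hSmulV L H V) := by
      rw [Submodule.Quotient.mk_eq_zero]
      exact Submodule.subset_span ⟨X, hX, u • v, rfl⟩
    rw [this, map_zero]
  · intro Y v u
    rw [bwdAux_apply, bwdAux_apply, mul_smul]

noncomputable def bwd : ((V ⧸ hSmulV L H V) →ₗ[ℂ] ℂ) →ₗ[ℂ] HomVF L H V where
  toFun Ψ := ⟨bwdAux L H V Ψ, bwdAux_mem L H V Ψ⟩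
  map_add' Ψ Ψ' := by
    apply Subtype.ext
    refine LinearMap.ext fun v => LinearMap.ext fun u => ?_
    simp
  map_smul' c Ψ := by
    apply Subtype.ext
    refine LinearMap.ext fun v => LinearMap.ext fun u => ?_
    simp

/-- Algebraic core of Lemma 9.1: `Hom_{U(𝔤)}(V, ℱ) ≅ Hom_ℂ(V/𝔥V, ℂ)`, via
`Φ ↦ (v mod 𝔥V ↦ Φ(v)(1))`, with inverse `Ψ ↦ (v ↦ (u ↦ Ψ(u·v mod 𝔥V)))`. -/
theorem homVF_equiv_dual_of_coinvariants :
    ∃ e : HomVF L H V ≃ₗ[ℂ] ((V ⧸ hSmulV L H V) →ₗ[ℂ] ℂ),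
      (∀ (Φ : HomVF L H V) (v : V),
        e Φ (Submodule.Quotient.mk v) = (Φ : V →ₗ[ℂ] (UniversalEnvelopingAlgebra ℂ L →ₗ[ℂ] ℂ)) v 1) ∧
      (∀ (Ψ : (V ⧸ hSmulV L H V) →ₗ[ℂ] ℂ) (v : V) (u : UniversalEnvelopingAlgebra ℂ L),
        ((e.symm Ψ : V →ₗ[ℂ] (UniversalEnvelopingAlgebra ℂ L →ₗ[ℂ] ℂ))) v u
          = Ψ (Submodule.Quotient.mk (u • v))) := by
  refine ⟨LinearEquiv.ofLinear (fwd L H V) (bwd L H V) ?_ ?_, ?_, ?_⟩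
  · refine LinearMap.ext fun Ψ => LinearMap.ext fun x => ?_
    obtain ⟨v, rfl⟩ := Submodule.Quotient.mk_surjective _ x
    simp [fwd, bwd, one_smul]
  · refine LinearMap.ext fun Φ => Subtype.ext (LinearMap.ext fun v => LinearMap.ext fun u => ?_)
    have h := Φ.2.2 u v 1
    simp only [LinearMap.comp_apply, LinearMap.id_apply, fwd, bwd, LinearMap.coe_mk,
      AddHom.coe_mk, bwdAux_apply, fwdAux_mk]
    rw [h, one_mul]
  · intro Φ v
    simp [fwd]
  · intro Ψ v u
    simp [bwd]

end Stmt5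
end

section
/- Let π : X' → Y be a morphism of schemes, where X' is irreducible and separated. Let Z be a scheme and let j : Z → Y and j' : Z → X' be open immersions satisfying π ∘ j' = j. Then the set-theoretic preimage of j(Z) under π equals j'(Z); that is, π⁻¹(j(Z)) = j'(Z) as subsets of X'. (This claim is proved inside the proof of Definition–Proposition 7.4 of the paper, where it is used to compare compactifications: the section σ : j(Z) → π⁻¹(j(Z)) induced by j' is a closed immersion because π⁻¹(j(Z)) is separated, and its open image in the irreducible set π⁻¹(j(Z)) must therefore be everything.) -/
open AlgebraicGeometry CategoryTheory

/-!
Over the open subscheme `U = π⁻¹(j(Z))`, the morphism `π` factors through `j`, giving `p : U ⟶ Z`,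
and `j'` factors through `U`, giving a section `σ : Z ⟶ U` of `p` which is an open immersion.
As `U` is separated, so is `p`, and a section of a separated morphism is a closed immersion.
Thus `σ(Z)` is clopen in `U`, which is irreducible as an open subset of `X'`; hence `σ(Z) = U`.
-/

namespace AlgebraicGeometry

theorem surjective_of_isOpenImmersion_of_comp_eq_id {U Z : Scheme} [PreconnectedSpace U]
    (σ : Z ⟶ U) (p : U ⟶ Z) [IsOpenImmersion σ] [IsSeparated p] (hσp : σ ≫ p = 𝟙 Z) :
    Function.Surjective σ.base := by
  have : IsClosedImmersion (σ ≫ p) := hσp ▸ inferInstance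
  have : IsClosedImmersion σ := .of_comp σ p
  have hclopen : IsClopen (Set.range σ.base) :=
    ⟨σ.isClosedEmbedding.isClosed_range, σ.isOpenEmbedding.isOpen_range⟩
  rcases isEmpty_or_nonempty U with hU | ⟨⟨u⟩⟩
  · exact fun u ↦ (hU.false u).elim
  · exact Set.range_eq_univ.mp (hclopen.eq_univ ⟨_, p.base u, rfl⟩)

end AlgebraicGeometry

/-- Claim inside the proof of Definition–Proposition 7.4: given a morphism `π : X' ⟶ Y` with
`X'` irreducible and separated, and open immersions `j : Z ⟶ Y`, `j' : Z ⟶ X'` with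
`j' ≫ π = j`, the set-theoretic preimage of `j(Z)` under `π` equals `j'(Z)`. -/
theorem preimage_of_open_immersion_section {X' Y Z : Scheme}
    (π : X' ⟶ Y) (j : Z ⟶ Y) (j' : Z ⟶ X')
    [IsOpenImmersion j] [IsOpenImmersion j']
    [IrreducibleSpace X'] [X'.IsSeparated]
    (h : j' ≫ π = j) :
    π.base ⁻¹' (Set.range j.base) = Set.range j'.base := by
  let U : X'.Opens := π ⁻¹ᵁ j.opensRange
  have hj'U : Set.range j'.base ⊆ Set.range U.ι.base := by
    rintro _ ⟨z, rfl⟩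
    simp [U, ← h]
  have hUπ : Set.range (U.ι ≫ π).base ⊆ Set.range j.base := by
    rintro _ ⟨u, rfl⟩
    exact u.2
  let σ := IsOpenImmersion.lift U.ι j' hj'U
  let p := IsOpenImmersion.lift j (U.ι ≫ π) hUπ
  have hσ : σ ≫ U.ι = j' := IsOpenImmersion.lift_fac _ _ _
  have hp : p ≫ j = U.ι ≫ π := IsOpenImmersion.lift_fac _ _ _
  have hσp : σ ≫ p = 𝟙 Z := by
    rw [← cancel_mono j, Category.assoc, hp, ← Category.assoc, hσ, h, Category.id_comp]
  have : IsOpenImmersion σ := .of_comp σ U.ι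
  have : PreirreducibleSpace U := U.ι.isOpenEmbedding.preirreducibleSpace
  have : IsSeparated (p ≫ j) := hp ▸ inferInstance
  have : IsSeparated p := .of_comp p j
  rw [← hσ, Scheme.Hom.comp_base, TopCat.coe_comp, Set.range_comp,
    (surjective_of_isOpenImmersion_of_comp_eq_id σ p hσp).range_eq, Set.image_univ,
    Scheme.Opens.range_ι]
  rfl
end
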